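/- arXiv:2112.06973 — 6 statements merged into one kernel-verified Lean document; each statement's English description precedes it below -/
import Mathlib

section
/- Suppose r·R₀ ≠ g·G₀ and r·R₀, g·G₀ > 0. Then the functions G(t) = (r·G₀·R₀ - g·G₀²)·exp((g·G₀ - r·R₀)·t) / (r·R₀ - g·G₀·exp((g·G₀ - r·R₀)·t)) and R(t) = (r·R₀² - g·G₀·R₀) / (r·R₀ - g·G₀·exp((g·G₀ - r·R₀)·t)) solve the unaimed-fire Lanchester system R' = -g·R·G, G' = -r·R·G on [0, ∞) with G(0) = G₀, R(0) = R₀. -/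
open Real

lemma hasDerivAt_exp_const_mul (k t : ℝ) :
    HasDerivAt (fun t => exp (k * t)) (k * exp (k * t)) t := by
  simpa [mul_comm] using ((hasDerivAt_id t).const_mul k).exp

lemma hasDerivAt_const_sub_mul_exp (a b k t : ℝ) :
    HasDerivAt (fun t => a - b * exp (k * t)) (-(b * (k * exp (k * t)))) t := by
  simpa using ((hasDerivAt_exp_const_mul k t).const_mul b).const_sub a

/-- For `t ≥ 0`, the factor `exp ((b - a) * t)` is `≥ 1` exactly when `a < b`, so it pushes
`b * exp ((b - a) * t)` further away from `a`. -/
lemma sub_mul_exp_sub_mul_ne_zero {a b t : ℝ} (hb : 0 ≤ b) (hab : a ≠ b) (ht : 0 ≤ t) :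
    a - b * exp ((b - a) * t) ≠ 0 := by
  rcases hab.lt_or_gt with h | h
  · have : 1 ≤ exp ((b - a) * t) := one_le_exp (mul_nonneg (by linarith) ht)
    exact (sub_neg.2 (h.trans_le (le_mul_of_one_le_right hb this))).ne
  · have : exp ((b - a) * t) ≤ 1 := exp_le_one_iff.2 (mul_nonpos_of_nonpos_of_nonneg (by linarith) ht)
    exact (sub_pos.2 ((mul_le_of_le_one_right hb this).trans_lt h)).ne'

theorem lanchester_unaimed_explicit_solution_general (g r G₀ R₀ : ℝ) (hg : 0 < g)
    (hG₀ : 0 < G₀) (hne : r * R₀ ≠ g * G₀)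
    (G R : ℝ → ℝ)
    (hGdef : G = fun t => (r * G₀ * R₀ - g * G₀ ^ 2) * Real.exp ((g * G₀ - r * R₀) * t)
      / (r * R₀ - g * G₀ * Real.exp ((g * G₀ - r * R₀) * t)))
    (hRdef : R = fun t => (r * R₀ ^ 2 - g * G₀ * R₀)
      / (r * R₀ - g * G₀ * Real.exp ((g * G₀ - r * R₀) * t))) :
    (∀ t : ℝ, 0 ≤ t → HasDerivAt R (-(g * R t * G t)) t) ∧
    (∀ t : ℝ, 0 ≤ t → HasDerivAt G (-(r * R t * G t)) t) ∧
    G 0 = G₀ ∧ R 0 = R₀ := by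
  have hD : ∀ t, 0 ≤ t → r * R₀ - g * G₀ * exp ((g * G₀ - r * R₀) * t) ≠ 0 :=
    fun t ht => sub_mul_exp_sub_mul_ne_zero (mul_pos hg hG₀).le hne ht
  have hD' := hasDerivAt_const_sub_mul_exp (r * R₀) (g * G₀) (g * G₀ - r * R₀)
  subst hGdef hRdef
  refine ⟨fun t ht => ?_, fun t ht => ?_, ?_, ?_⟩
  · refine ((hasDerivAt_const t _).div (hD' t) (hD t ht)).congr_deriv ?_
    field_simp
    ring
  · refine (((hasDerivAt_exp_const_mul _ t).const_mul _).div (hD' t) (hD t ht)).congr_deriv ?_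
    field_simp
    ring
  · have h0 := hD 0 le_rfl
    simp only [mul_zero, exp_zero, mul_one] at h0 ⊢
    rw [div_eq_iff h0]
    ring
  · have h0 := hD 0 le_rfl
    simp only [mul_zero, exp_zero, mul_one] at h0 ⊢
    field_simp

theorem lanchester_unaimed_explicit_solution (g r G₀ R₀ : ℝ) (hg : 0 < g) (hr : 0 < r)
    (hG₀ : 0 < G₀) (hR₀ : 0 < R₀) (hne : r * R₀ ≠ g * G₀)
    (G R : ℝ → ℝ)
    (hGdef : G = fun t => (r * G₀ * R₀ - g * G₀ ^ 2) * Real.exp ((g * G₀ - r * R₀) * t)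
      / (r * R₀ - g * G₀ * Real.exp ((g * G₀ - r * R₀) * t)))
    (hRdef : R = fun t => (r * R₀ ^ 2 - g * G₀ * R₀)
      / (r * R₀ - g * G₀ * Real.exp ((g * G₀ - r * R₀) * t))) :
    (∀ t : ℝ, 0 ≤ t → HasDerivAt R (-(g * R t * G t)) t) ∧
    (∀ t : ℝ, 0 ≤ t → HasDerivAt G (-(r * R t * G t)) t) ∧
    G 0 = G₀ ∧ R 0 = R₀ :=
  lanchester_unaimed_explicit_solution_general g r G₀ R₀ hg hG₀ hne G R hGdef hRdef
end

section
/- In the unaimed-fire Lanchester system with r·R₀ > g·G₀ > 0, let G and R be the explicit solutions of the unaimed-fire system; then lim_{t→∞} G(t) = 0 and lim_{t→∞} R(t) = (r·R₀² - g·G₀·R₀)/(r·R₀) > 0. -/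
open Filter Topology

theorem lanchester_unaimed_asymptotics (g r G₀ R₀ : ℝ) (hg : 0 < g) (hr : 0 < r)
    (hG₀ : 0 < G₀) (hR₀ : 0 < R₀) (hlt : g * G₀ < r * R₀)
    (G R : ℝ → ℝ)
    (hGdef : G = fun t => (r * G₀ * R₀ - g * G₀ ^ 2) * Real.exp ((g * G₀ - r * R₀) * t)
      / (r * R₀ - g * G₀ * Real.exp ((g * G₀ - r * R₀) * t)))
    (hRdef : R = fun t => (r * R₀ ^ 2 - g * G₀ * R₀)
      / (r * R₀ - g * G₀ * Real.exp ((g * G₀ - r * R₀) * t))) :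
    Tendsto G atTop (𝓝 0) ∧
    Tendsto R atTop (𝓝 ((r * R₀ ^ 2 - g * G₀ * R₀) / (r * R₀))) ∧
    0 < (r * R₀ ^ 2 - g * G₀ * R₀) / (r * R₀) := by
  have hc : g * G₀ - r * R₀ < 0 := by linarith
  have hE : Tendsto (fun t => Real.exp ((g * G₀ - r * R₀) * t)) atTop (𝓝 0) := by
    apply Real.tendsto_exp_atBot.comp
    exact tendsto_id.const_mul_atTop_of_neg hc
  have hden : Tendsto (fun t => r * R₀ - g * G₀ * Real.exp ((g * G₀ - r * R₀) * t))
      atTop (𝓝 (r * R₀)) := by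
    have h2 : Tendsto (fun t => g * G₀ * Real.exp ((g * G₀ - r * R₀) * t)) atTop
        (𝓝 (g * G₀ * 0)) := tendsto_const_nhds.mul hE
    have h3 : Tendsto (fun t : ℝ => r * R₀) atTop (𝓝 (r * R₀)) := tendsto_const_nhds
    simpa using h3.sub h2
  have hrR : (r * R₀ : ℝ) ≠ 0 := by positivity
  refine ⟨?_, ?_, ?_⟩
  · rw [hGdef]
    have hnum : Tendsto (fun t => (r * G₀ * R₀ - g * G₀ ^ 2) *
        Real.exp ((g * G₀ - r * R₀) * t)) atTop (𝓝 ((r * G₀ * R₀ - g * G₀ ^ 2) * 0)) :=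
      tendsto_const_nhds.mul hE
    simpa only [mul_zero, zero_div, Pi.div_def] using hnum.div hden hrR
  · rw [hRdef]
    exact tendsto_const_nhds.div hden hrR
  · have h1 : 0 < r * R₀ ^ 2 - g * G₀ * R₀ := by nlinarith
    positivity
end

section
/- In the aimed-fire Lanchester system with g·G(0)² > r·R(0)² and G(0), R(0) > 0, there exists a finite time t* > 0 at which R(t*) = 0 while G(t*) > 0. -/
/-!
The quantity `g G² - r R²` is conserved, equal to `K = g G(0)² - r R(0)² > 0`. As `r > 0`,
this gives `g G² ≥ K`, so `G` never vanishes, stays positive, and in fact `G ≥ √(K / g)` at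
all times. Hence `R` decreases at a rate at least `g √(K / g)` and reaches zero in finite time,
while `G` is still positive.
-/

open Real

theorem aimed_fire_invariant_eq {g r : ℝ} {G R : ℝ → ℝ}
    (hG : ∀ t, HasDerivAt G (-(r * R t)) t) (hR : ∀ t, HasDerivAt R (-(g * G t)) t) (t : ℝ) :
    g * G t ^ 2 - r * R t ^ 2 = g * G 0 ^ 2 - r * R 0 ^ 2 := by
  have hderiv : ∀ s, HasDerivAt (fun s => g * G s ^ 2 - r * R s ^ 2) 0 s := fun s =>
    ((((hG s).pow 2).const_mul g).sub (((hR s).pow 2).const_mul r)).congr_deriv (by ring)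
  exact is_const_of_deriv_eq_zero (fun s => (hderiv s).differentiableAt)
    (fun s => (hderiv s).deriv) t 0

theorem pos_of_continuous_of_ne_zero {α : Type*} [TopologicalSpace α] [PreconnectedSpace α]
    {f : α → ℝ} (hf : Continuous f) {a : α} (ha : 0 < f a)
    (hne : ∀ x, f x ≠ 0) (x : α) : 0 < f x := by
  by_contra! hx
  obtain ⟨y, hy⟩ := intermediate_value_univ x a hf ⟨hx, ha.le⟩
  exact hne y hy

theorem exists_pos_eq_zero_of_deriv_le_neg {f f' : ℝ → ℝ} {m : ℝ}
    (hf : ∀ t, HasDerivAt f (f' t) t) (hf' : ∀ t, f' t ≤ -m) (hm : 0 < m) (h0 : 0 < f 0) :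
    ∃ t, 0 < t ∧ f t = 0 := by
  have hdiff : Differentiable ℝ f := fun t => (hf t).differentiableAt
  set T := f 0 / m
  have hT : 0 ≤ T := by positivity
  have hfT : f T ≤ 0 := by
    have := image_sub_le_mul_sub_of_deriv_le hdiff (fun t => (hf t).deriv ▸ hf' t) hT
    have hmT : m * T = f 0 := mul_div_cancel₀ _ hm.ne'
    linarith
  obtain ⟨t, ⟨ht0, -⟩, hft⟩ :=
    intermediate_value_Icc' hT hdiff.continuous.continuousOn ⟨hfT, h0.le⟩
  refine ⟨t, lt_of_le_of_ne ht0 ?_, hft⟩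
  rintro rfl
  exact h0.ne' hft

theorem lanchester_aimed_finite_time_victory (g r : ℝ) (hg : 0 < g) (hr : 0 < r)
    (G R : ℝ → ℝ)
    (hG : ∀ t : ℝ, HasDerivAt G (-(r * R t)) t)
    (hR : ∀ t : ℝ, HasDerivAt R (-(g * G t)) t)
    (hG0 : 0 < G 0) (hR0 : 0 < R 0)
    (hlt : r * R 0 ^ 2 < g * G 0 ^ 2) :
    ∃ t : ℝ, 0 < t ∧ R t = 0 ∧ 0 < G t := by
  set K := g * G 0 ^ 2 - r * R 0 ^ 2
  have hK : 0 < K := sub_pos.2 hlt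
  have hGsq : ∀ t, K / g ≤ G t ^ 2 := fun t => by
    rw [div_le_iff₀ hg]
    nlinarith [aimed_fire_invariant_eq hG hR t, sq_nonneg (R t)]
  have hGpos : ∀ t, 0 < G t :=
    pos_of_continuous_of_ne_zero (continuous_iff_continuousAt.2 fun t => (hG t).continuousAt) hG0
      fun t ht => by nlinarith [hGsq t, div_pos hK hg]
  have hGlb : ∀ t, √(K / g) ≤ G t := fun t => sqrt_le_iff.2 ⟨(hGpos t).le, hGsq t⟩
  obtain ⟨t, ht, hRt⟩ := exists_pos_eq_zero_of_deriv_le_neg hR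
    (fun t => neg_le_neg (mul_le_mul_of_nonneg_left (hGlb t) hg.le))
    (mul_pos hg (sqrt_pos.2 (div_pos hK hg))) hR0
  exact ⟨t, ht, hRt, hGpos t⟩
end

section
/- In the 3D free-for-all unaimed Lanchester system, if x₁X₁(0) > x₂X₂(0) ≥ x₃X₃(0) and all Xᵢ(0) > 0, then X₂(t) → 0 and X₃(t) → 0 as t → +∞, while X₁(t) converges to a strictly positive limit. -/
/-!
In the units `uᵢ = xᵢ Xᵢ` the system reads `uᵢ' = -(uⱼ + uₖ) uᵢ / 2`. Each of `uᵢ`, `u₁ - u₂`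
and `u₂ - u₃` solves a linear equation `v' = c v` and so keeps the sign of its initial value,
while `W = u₁ - u₂ - u₃` satisfies `W' = u₂ u₃ ≥ 0`. The crux is that `W` becomes positive at
some time `t₀`: otherwise `u₁ = O(1/t)` and `u₃ = O(1/t)`, but then `u₁ - u₂` decays no faster
than `t^(-1/2)`. After `t₀` we have `u₁ ≥ W(t₀) > 0`, which makes `u₂` and `u₃` decay
exponentially, and `u₁`, being nonincreasing, converges to a limit `≥ W(t₀)`.
-/

open Filter Topology Set

theorem monotoneOn_Ici_of_hasDerivAt_nonneg {f f' : ℝ → ℝ} {a : ℝ}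
    (hf : ∀ t, a ≤ t → HasDerivAt f (f' t) t) (hf' : ∀ t, a ≤ t → 0 ≤ f' t) :
    MonotoneOn f (Ici a) :=
  monotoneOn_of_hasDerivWithinAt_nonneg (convex_Ici a)
    (fun t ht => (hf t ht).continuousAt.continuousWithinAt)
    (fun t ht => (hf t (interior_subset ht)).hasDerivWithinAt)
    (fun t ht => hf' t (interior_subset ht))

theorem antitoneOn_Ici_of_hasDerivAt_nonpos {f f' : ℝ → ℝ} {a : ℝ}
    (hf : ∀ t, a ≤ t → HasDerivAt f (f' t) t) (hf' : ∀ t, a ≤ t → f' t ≤ 0) :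
    AntitoneOn f (Ici a) :=
  antitoneOn_of_hasDerivWithinAt_nonpos (convex_Ici a)
    (fun t ht => (hf t ht).continuousAt.continuousWithinAt)
    (fun t ht => (hf t (interior_subset ht)).hasDerivWithinAt)
    (fun t ht => hf' t (interior_subset ht))

theorem ContinuousOn.exists_lipschitzWith_mul {c : ℝ → ℝ} {a b : ℝ}
    (hc : ContinuousOn c (Icc a b)) :
    ∃ K : NNReal, ∀ t ∈ Icc a b, LipschitzWith K (fun y : ℝ => c t * y) := by
  obtain ⟨M, hM⟩ := isCompact_Icc.exists_bound_of_continuousOn hc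
  refine ⟨M.toNNReal, fun t ht => (lipschitzWith_smul (c t)).weaken ?_⟩
  rw [← NNReal.coe_le_coe, coe_nnnorm, Real.coe_toNNReal']
  exact (hM t ht).trans (le_max_left _ _)

theorem eqOn_zero_of_hasDerivAt_mul_of_left_eq_zero {f c : ℝ → ℝ} {a b : ℝ}
    (hc : ContinuousOn c (Icc a b)) (hf : ∀ t ∈ Icc a b, HasDerivAt f (c t * f t) t)
    (ha : f a = 0) : EqOn f 0 (Icc a b) := by
  obtain ⟨K, hK⟩ := hc.exists_lipschitzWith_mul
  exact ODE_solution_unique_of_mem_Icc_right (v := fun t y => c t * y) (s := fun _ => univ)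
    (g := fun _ => 0) (fun t ht => (hK t (Ico_subset_Icc_self ht)).lipschitzOnWith)
    (fun t ht => (hf t ht).continuousAt.continuousWithinAt)
    (fun t ht => (hf t (Ico_subset_Icc_self ht)).hasDerivWithinAt) (fun _ _ => trivial)
    continuousOn_const (fun t _ => by simpa using (hasDerivWithinAt_const t (Ici t) (0 : ℝ)))
    (fun _ _ => trivial) ha

theorem eqOn_zero_of_hasDerivAt_mul_of_right_eq_zero {f c : ℝ → ℝ} {a b : ℝ}
    (hc : ContinuousOn c (Icc a b)) (hf : ∀ t ∈ Icc a b, HasDerivAt f (c t * f t) t)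
    (hb : f b = 0) : EqOn f 0 (Icc a b) := by
  obtain ⟨K, hK⟩ := hc.exists_lipschitzWith_mul
  exact ODE_solution_unique_of_mem_Icc_left (v := fun t y => c t * y) (s := fun _ => univ)
    (g := fun _ => 0) (fun t ht => (hK t (Ioc_subset_Icc_self ht)).lipschitzOnWith)
    (fun t ht => (hf t ht).continuousAt.continuousWithinAt)
    (fun t ht => (hf t (Ioc_subset_Icc_self ht)).hasDerivWithinAt) (fun _ _ => trivial)
    continuousOn_const (fun t _ => by simpa using (hasDerivWithinAt_const t (Iic t) (0 : ℝ)))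
    (fun _ _ => trivial) hb

theorem pos_of_hasDerivAt_mul {f c : ℝ → ℝ} {a : ℝ} (hc : ContinuousOn c (Ici a))
    (hf : ∀ t, a ≤ t → HasDerivAt f (c t * f t) t) (ha : 0 < f a) :
    ∀ t, a ≤ t → 0 < f t := by
  intro t hat
  by_contra! hft
  obtain ⟨z, hz, hfz⟩ := intermediate_value_Icc' hat
    (fun s hs => (hf s hs.1).continuousAt.continuousWithinAt) ⟨hft, ha.le⟩
  have := eqOn_zero_of_hasDerivAt_mul_of_right_eq_zero (hc.mono Icc_subset_Ici_self)
    (fun s hs => hf s hs.1) hfz (left_mem_Icc.2 hz.1)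
  simp only [Pi.zero_apply] at this
  linarith

theorem nonneg_of_hasDerivAt_mul {f c : ℝ → ℝ} {a : ℝ} (hc : ContinuousOn c (Ici a))
    (hf : ∀ t, a ≤ t → HasDerivAt f (c t * f t) t) (ha : 0 ≤ f a) :
    ∀ t, a ≤ t → 0 ≤ f t := by
  rcases ha.eq_or_lt with ha | ha
  · intro t hat
    have := eqOn_zero_of_hasDerivAt_mul_of_left_eq_zero (hc.mono Icc_subset_Ici_self)
      (fun s hs => hf s hs.1) ha.symm (right_mem_Icc.2 hat)
    simp [this]
  · exact fun t hat => (pos_of_hasDerivAt_mul hc hf ha t hat).le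

theorem tendsto_zero_of_hasDerivAt_le_neg_mul {f f' : ℝ → ℝ} {a k : ℝ} (hk : 0 < k)
    (hf : ∀ t, a ≤ t → HasDerivAt f (f' t) t) (hf' : ∀ t, a ≤ t → f' t ≤ -k * f t)
    (hf₀ : ∀ t, a ≤ t → 0 ≤ f t) : Tendsto f atTop (𝓝 0) := by
  have bound : ∀ t, a ≤ t → f t ≤ f a * Real.exp (-k * (t - a)) := by
    intro t hat
    have := le_gronwallBound_of_liminf_deriv_right_le (b := t) (K := -k) (ε := 0)
      (fun s hs => (hf s hs.1).continuousAt.continuousWithinAt)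
      (fun s hs r hr => (hf s hs.1).hasDerivWithinAt.liminf_right_slope_le hr) le_rfl
      (fun s hs => by simpa using hf' s hs.1) t (right_mem_Icc.2 hat)
    rwa [gronwallBound_ε0] at this
  have hexp : Tendsto (fun t => f a * Real.exp (-k * (t - a))) atTop (𝓝 0) := by
    have : Tendsto (fun t => k * (t - a)) atTop atTop :=
      (tendsto_atTop_add_const_right _ (-a) tendsto_id).const_mul_atTop hk
    simpa [neg_mul] using (Real.tendsto_exp_neg_atTop_nhds_zero.comp this).const_mul (f a)
  refine tendsto_of_tendsto_of_tendsto_of_le_of_le' tendsto_const_nhds hexp ?_ ?_ <;>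
    filter_upwards [eventually_ge_atTop a] with t ht
  exacts [hf₀ t ht, bound t ht]

theorem AntitoneOn.exists_tendsto_atTop_of_forall_le {f : ℝ → ℝ} {a m : ℝ}
    (hf : AntitoneOn f (Ici a)) (hm : ∀ t, a ≤ t → m ≤ f t) :
    ∃ L, m ≤ L ∧ Tendsto f atTop (𝓝 L) := by
  have hanti : Antitone fun t => f (max t a) := fun s t hst =>
    hf (le_max_right s a) (le_max_right t a) (max_le_max_right a hst)
  have hbdd : BddBelow (range fun t => f (max t a)) := ⟨m, by
    rintro _ ⟨t, rfl⟩; exact hm _ (le_max_right t a)⟩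
  refine ⟨⨅ t, f (max t a), le_ciInf fun t => hm _ (le_max_right t a), ?_⟩
  refine (tendsto_atTop_ciInf hanti hbdd).congr' ?_
  filter_upwards [eventually_ge_atTop a] with t ht
  rw [max_eq_left ht]

theorem add_mul_le_inv_of_hasDerivAt_le_neg_mul_sq {f f' : ℝ → ℝ} {a k : ℝ}
    (hf : ∀ t, a ≤ t → HasDerivAt f (f' t) t) (hpos : ∀ t, a ≤ t → 0 < f t)
    (hf' : ∀ t, a ≤ t → f' t ≤ -k * f t ^ 2) :
    ∀ t, a ≤ t → (f a)⁻¹ + k * (t - a) ≤ (f t)⁻¹ := by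
  have hmono : MonotoneOn (fun t => (f t)⁻¹ - k * t) (Ici a) := by
    refine monotoneOn_Ici_of_hasDerivAt_nonneg
      (fun t ht => ((hf t ht).inv (hpos t ht).ne').sub ((hasDerivAt_id t).const_mul k)) ?_
    intro t ht
    have hsq : 0 < f t ^ 2 := pow_pos (hpos t ht) 2
    rw [mul_one, sub_nonneg, le_div_iff₀ hsq]
    linarith [hf' t ht]
  intro t ht
  have := hmono self_mem_Ici ht ht
  simp only at this
  linarith

/-- The system in the units `uᵢ = xᵢ Xᵢ`, where the fighting abilities drop out. The sums are
written cyclically so that the system is invariant under `rotate`. -/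
structure IsUnaimedLanchester (u₁ u₂ u₃ : ℝ → ℝ) : Prop where
  hasDerivAt₁ : ∀ t, 0 ≤ t → HasDerivAt u₁ (-(u₂ t + u₃ t) / 2 * u₁ t) t
  hasDerivAt₂ : ∀ t, 0 ≤ t → HasDerivAt u₂ (-(u₃ t + u₁ t) / 2 * u₂ t) t
  hasDerivAt₃ : ∀ t, 0 ≤ t → HasDerivAt u₃ (-(u₁ t + u₂ t) / 2 * u₃ t) t

namespace IsUnaimedLanchester

variable {u₁ u₂ u₃ : ℝ → ℝ}

theorem rotate (h : IsUnaimedLanchester u₁ u₂ u₃) : IsUnaimedLanchester u₂ u₃ u₁ :=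
  ⟨h.hasDerivAt₂, h.hasDerivAt₃, h.hasDerivAt₁⟩

theorem continuousOn₁ (h : IsUnaimedLanchester u₁ u₂ u₃) : ContinuousOn u₁ (Ici 0) :=
  fun t ht => (h.hasDerivAt₁ t ht).continuousAt.continuousWithinAt

theorem pos₁ (h : IsUnaimedLanchester u₁ u₂ u₃) (h0 : 0 < u₁ 0) : ∀ t, 0 ≤ t → 0 < u₁ t :=
  pos_of_hasDerivAt_mul
    ((h.rotate.continuousOn₁.add h.rotate.rotate.continuousOn₁).neg.div_const 2)
    h.hasDerivAt₁ h0

theorem hasDerivAt_sub (h : IsUnaimedLanchester u₁ u₂ u₃) (t : ℝ) (ht : 0 ≤ t) :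
    HasDerivAt (fun s => u₁ s - u₂ s) (-u₃ t / 2 * (u₁ t - u₂ t)) t :=
  ((h.hasDerivAt₁ t ht).sub (h.hasDerivAt₂ t ht)).congr_deriv (by ring)

theorem lt_of_initial_lt (h : IsUnaimedLanchester u₁ u₂ u₃) (h0 : u₂ 0 < u₁ 0) :
    ∀ t, 0 ≤ t → u₂ t < u₁ t := fun t ht =>
  sub_pos.1 (pos_of_hasDerivAt_mul (h.rotate.rotate.continuousOn₁.neg.div_const 2)
    h.hasDerivAt_sub (sub_pos.2 h0) t ht)

theorem le_of_initial_le (h : IsUnaimedLanchester u₁ u₂ u₃) (h0 : u₂ 0 ≤ u₁ 0) :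
    ∀ t, 0 ≤ t → u₂ t ≤ u₁ t := fun t ht =>
  sub_nonneg.1 (nonneg_of_hasDerivAt_mul (h.rotate.rotate.continuousOn₁.neg.div_const 2)
    h.hasDerivAt_sub (sub_nonneg.2 h0) t ht)

theorem monotoneOn_sub_sub (h : IsUnaimedLanchester u₁ u₂ u₃) (h₂ : ∀ t, 0 ≤ t → 0 ≤ u₂ t)
    (h₃ : ∀ t, 0 ≤ t → 0 ≤ u₃ t) :
    MonotoneOn (fun t => u₁ t - u₂ t - u₃ t) (Ici 0) :=
  monotoneOn_Ici_of_hasDerivAt_nonneg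
    (fun t ht => (((h.hasDerivAt₁ t ht).sub (h.hasDerivAt₂ t ht)).sub
      (h.hasDerivAt₃ t ht)).congr_deriv (show _ = u₂ t * u₃ t by ring))
    (fun t ht => mul_nonneg (h₂ t ht) (h₃ t ht))

theorem antitoneOn₁ (h : IsUnaimedLanchester u₁ u₂ u₃) (h₁ : ∀ t, 0 ≤ t → 0 ≤ u₁ t)
    (h₂ : ∀ t, 0 ≤ t → 0 ≤ u₂ t) (h₃ : ∀ t, 0 ≤ t → 0 ≤ u₃ t) : AntitoneOn u₁ (Ici 0) :=
  antitoneOn_Ici_of_hasDerivAt_nonpos h.hasDerivAt₁ fun t ht =>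
    mul_nonpos_of_nonpos_of_nonneg (by linarith [h₂ t ht, h₃ t ht]) (h₁ t ht)

theorem tendsto₁_zero (h : IsUnaimedLanchester u₁ u₂ u₃) {a ε : ℝ} (ha : 0 ≤ a) (hε : 0 < ε)
    (hsum : ∀ t, a ≤ t → ε ≤ u₂ t + u₃ t) (h₁ : ∀ t, a ≤ t → 0 ≤ u₁ t) :
    Tendsto u₁ atTop (𝓝 0) :=
  tendsto_zero_of_hasDerivAt_le_neg_mul (half_pos hε)
    (fun t ht => h.hasDerivAt₁ t (ha.trans ht))
    (fun t ht => by
      rw [neg_div, neg_mul, neg_mul, neg_le_neg_iff]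
      exact mul_le_mul_of_nonneg_right (by linarith [hsum t ht]) (h₁ t ht)) h₁

theorem sq_sub_mul_le (h : IsUnaimedLanchester u₁ u₂ u₃) {κ : ℝ}
    (h₃ : ∀ t, 0 ≤ t → u₃ t * (κ + t) ≤ 1) :
    ∀ t, 0 ≤ t → (u₁ 0 - u₂ 0) ^ 2 * κ ≤ (u₁ t - u₂ t) ^ 2 * (κ + t) := by
  have hderiv (t : ℝ) (ht : 0 ≤ t) : HasDerivAt (fun t => (u₁ t - u₂ t) ^ 2 * (κ + t))
      ((u₁ t - u₂ t) ^ 2 * (1 - u₃ t * (κ + t))) t :=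
    (((h.hasDerivAt_sub t ht).pow 2).mul ((hasDerivAt_id t).const_add κ)).congr_deriv
      (by simp only [id_eq, Pi.pow_apply]; ring)
  have hmono := monotoneOn_Ici_of_hasDerivAt_nonneg hderiv
    fun t ht => mul_nonneg (sq_nonneg _) (sub_nonneg.2 (h₃ t ht))
  intro t ht
  simpa using hmono self_mem_Ici ht ht

theorem exists_add_lt (h : IsUnaimedLanchester u₁ u₂ u₃) (h₁ : ∀ t, 0 ≤ t → 0 < u₁ t)
    (h₃ : ∀ t, 0 ≤ t → 0 < u₃ t) (h₃₂ : ∀ t, 0 ≤ t → u₃ t ≤ u₂ t)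
    (h₂₁ : ∀ t, 0 ≤ t → u₂ t ≤ u₁ t) (h0 : u₂ 0 < u₁ 0) :
    ∃ t, 0 ≤ t ∧ u₂ t + u₃ t < u₁ t := by
  by_contra! hle
  -- Then `1 / u₁` grows at rate `≥ 1 / 2` and `1 / u₃` at rate `≥ 1`, so `u₁ t ≤ 2 / t` and
  -- `u₃ t ≤ 1 / (κ + t)`; the latter makes `(u₁ - u₂) ^ 2 (κ + t)` nondecreasing, hence `≥ β`.
  have inv₁ := add_mul_le_inv_of_hasDerivAt_le_neg_mul_sq (k := 1 / 2) h.hasDerivAt₁ h₁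
    fun t ht => by nlinarith [hle t ht, h₁ t ht]
  have inv₃ := add_mul_le_inv_of_hasDerivAt_le_neg_mul_sq (k := 1) h.hasDerivAt₃ h₃
    fun t ht => by nlinarith [h₃₂ t ht, h₂₁ t ht, h₃ t ht]
  set κ := (u₃ 0)⁻¹
  have hκ : 0 < κ := inv_pos.2 (h₃ 0 le_rfl)
  have hD := h.sq_sub_mul_le (κ := κ) fun t ht =>
    (le_inv_mul_iff₀ (h₃ t ht)).1 (by simpa using inv₃ t ht)
  set β := (u₁ 0 - u₂ 0) ^ 2 * κ
  have hβ : 0 < β := mul_pos (pow_pos (sub_pos.2 h0) 2) hκ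
  set T := max 1 (8 * (κ + 1) / β)
  have hT₁ : 1 ≤ T := le_max_left _ _
  have hT₀ : 0 ≤ T := zero_le_one.trans hT₁
  have hTβ : 8 * (κ + 1) ≤ β * T := by
    have := (div_le_iff₀ hβ).1 (le_max_right 1 (8 * (κ + 1) / β))
    linarith
  have hu₁T : u₁ T * T ≤ 2 := by
    have : u₁ T * (T / 2) ≤ 1 := (le_inv_mul_iff₀ (h₁ T hT₀)).1 (by
      simpa using (inv₁ T hT₀).trans' (by linarith [inv_pos.2 (h₁ 0 le_rfl)]))
    linarith
  have hDu₁ : (u₁ T - u₂ T) ^ 2 ≤ u₁ T ^ 2 :=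
    pow_le_pow_left₀ (by linarith [h₂₁ T hT₀]) (by linarith [h₃₂ T hT₀, h₃ T hT₀]) 2
  have : β * T ≤ 4 * (κ + 1) := calc
    β * T ≤ (u₁ T - u₂ T) ^ 2 * (κ + T) * T := by gcongr; exact hD T hT₀
    _ ≤ u₁ T ^ 2 * ((κ + 1) * T) * T := by gcongr; nlinarith
    _ = (κ + 1) * (u₁ T * T) ^ 2 := by ring
    _ ≤ (κ + 1) * 2 ^ 2 := by gcongr; exact mul_nonneg (h₁ T hT₀).le hT₀
    _ = 4 * (κ + 1) := by ring
  linarith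

theorem tendsto (h : IsUnaimedLanchester u₁ u₂ u₃) (h30 : 0 < u₃ 0) (h32 : u₃ 0 ≤ u₂ 0)
    (h21 : u₂ 0 < u₁ 0) : Tendsto u₂ atTop (𝓝 0) ∧ Tendsto u₃ atTop (𝓝 0) ∧
      ∃ L, 0 < L ∧ Tendsto u₁ atTop (𝓝 L) := by
  have h₃ := h.rotate.rotate.pos₁ h30
  have h₂ := h.rotate.pos₁ (h30.trans_le h32)
  have h₁ := h.pos₁ (h30.trans_le h32 |>.trans h21)
  obtain ⟨t₀, ht₀, hlt⟩ := h.exists_add_lt h₁ h₃ (h.rotate.le_of_initial_le h32)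
    (fun t ht => (h.lt_of_initial_lt h21 t ht).le) h21
  set ε := u₁ t₀ - u₂ t₀ - u₃ t₀
  have hε : 0 < ε := by linarith
  have hεu₁ : ∀ t, t₀ ≤ t → ε ≤ u₁ t := fun t ht => by
    have := h.monotoneOn_sub_sub (fun t ht => (h₂ t ht).le) (fun t ht => (h₃ t ht).le)
      ht₀ (ht₀.trans ht) ht
    linarith [h₂ t (ht₀.trans ht), h₃ t (ht₀.trans ht)]
  refine ⟨h.rotate.tendsto₁_zero ht₀ hε ?_ ?_, h.rotate.rotate.tendsto₁_zero ht₀ hε ?_ ?_,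
    ?_⟩
  · exact fun t ht => by linarith [hεu₁ t ht, h₃ t (ht₀.trans ht)]
  · exact fun t ht => (h₂ t (ht₀.trans ht)).le
  · exact fun t ht => by linarith [hεu₁ t ht, h₂ t (ht₀.trans ht)]
  · exact fun t ht => (h₃ t (ht₀.trans ht)).le
  · obtain ⟨L, hεL, hL⟩ := AntitoneOn.exists_tendsto_atTop_of_forall_le
      ((h.antitoneOn₁ (fun t ht => (h₁ t ht).le) (fun t ht => (h₂ t ht).le)
        (fun t ht => (h₃ t ht).le)).mono (Ici_subset_Ici.2 ht₀)) hεu₁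
    exact ⟨L, hε.trans_le hεL, hL⟩

end IsUnaimedLanchester

theorem lanchester_3d_winner_general (x₁ x₂ x₃ : ℝ) (hx₁ : 0 < x₁) (hx₂ : 0 < x₂) (hx₃ : 0 < x₃)
    (X₁ X₂ X₃ : ℝ → ℝ)
    (hX₁ : ∀ t : ℝ, 0 ≤ t → HasDerivAt X₁ (1 / 2 * (-(x₂ * X₂ t) - x₃ * X₃ t) * X₁ t) t)
    (hX₂ : ∀ t : ℝ, 0 ≤ t → HasDerivAt X₂ (1 / 2 * (-(x₁ * X₁ t) - x₃ * X₃ t) * X₂ t) t)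
    (hX₃ : ∀ t : ℝ, 0 ≤ t → HasDerivAt X₃ (1 / 2 * (-(x₁ * X₁ t) - x₂ * X₂ t) * X₃ t) t)
    (h30 : 0 < X₃ 0)
    (hord₁ : x₂ * X₂ 0 < x₁ * X₁ 0) (hord₂ : x₃ * X₃ 0 ≤ x₂ * X₂ 0) :
    Tendsto X₂ atTop (𝓝 0) ∧ Tendsto X₃ atTop (𝓝 0) ∧
    ∃ L : ℝ, 0 < L ∧ Tendsto X₁ atTop (𝓝 L) := by
  have h : IsUnaimedLanchester (fun t => x₁ * X₁ t) (fun t => x₂ * X₂ t) (fun t => x₃ * X₃ t) :=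
    ⟨fun t ht => ((hX₁ t ht).const_mul x₁).congr_deriv (by ring),
      fun t ht => ((hX₂ t ht).const_mul x₂).congr_deriv (by ring),
      fun t ht => ((hX₃ t ht).const_mul x₃).congr_deriv (by ring)⟩
  obtain ⟨h₂, h₃, L, hL, h₁⟩ := h.tendsto (mul_pos hx₃ h30) hord₂ hord₁
  refine ⟨?_, ?_, L / x₁, div_pos hL hx₁, ?_⟩
  · simpa [hx₂.ne'] using h₂.const_mul x₂⁻¹
  · simpa [hx₃.ne'] using h₃.const_mul x₃⁻¹
  · simpa [hx₁.ne', div_eq_inv_mul] using h₁.const_mul x₁⁻¹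

theorem lanchester_3d_winner (x₁ x₂ x₃ : ℝ) (hx₁ : 0 < x₁) (hx₂ : 0 < x₂) (hx₃ : 0 < x₃)
    (X₁ X₂ X₃ : ℝ → ℝ)
    (hX₁ : ∀ t : ℝ, 0 ≤ t → HasDerivAt X₁ (1 / 2 * (-(x₂ * X₂ t) - x₃ * X₃ t) * X₁ t) t)
    (hX₂ : ∀ t : ℝ, 0 ≤ t → HasDerivAt X₂ (1 / 2 * (-(x₁ * X₁ t) - x₃ * X₃ t) * X₂ t) t)
    (hX₃ : ∀ t : ℝ, 0 ≤ t → HasDerivAt X₃ (1 / 2 * (-(x₁ * X₁ t) - x₂ * X₂ t) * X₃ t) t)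
    (h10 : 0 < X₁ 0) (h20 : 0 < X₂ 0) (h30 : 0 < X₃ 0)
    (hord₁ : x₂ * X₂ 0 < x₁ * X₁ 0) (hord₂ : x₃ * X₃ 0 ≤ x₂ * X₂ 0) :
    Tendsto X₂ atTop (𝓝 0) ∧ Tendsto X₃ atTop (𝓝 0) ∧
    ∃ L : ℝ, 0 < L ∧ Tendsto X₁ atTop (𝓝 L) :=
  lanchester_3d_winner_general x₁ x₂ x₃ hx₁ hx₂ hx₃ X₁ X₂ X₃ hX₁ hX₂ hX₃ h30 hord₁ hord₂
end

section
/- Along solutions of the 3D army-of-one unaimed system X₁' = (-x₂X₂ - x₃X₃)X₁, X₂' = -½x₁X₁X₂, X₃' = -½x₁X₁X₃, the quantity x₁X₁(t) - 2(x₂X₂(t) + x₃X₃(t)) is constant in time. -/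
theorem hasDerivAt_armyOfOne_invariant {x₁ x₂ x₃ : ℝ} {X₁ X₂ X₃ : ℝ → ℝ} {t : ℝ}
    (hX₁ : HasDerivAt X₁ ((-(x₂ * X₂ t) - x₃ * X₃ t) * X₁ t) t)
    (hX₂ : HasDerivAt X₂ (-(1 / 2 * x₁ * X₁ t * X₂ t)) t)
    (hX₃ : HasDerivAt X₃ (-(1 / 2 * x₁ * X₁ t * X₃ t)) t) :
    HasDerivAt (fun s => x₁ * X₁ s - 2 * (x₂ * X₂ s + x₃ * X₃ s)) 0 t := by
  refine ((hX₁.const_mul x₁).sub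
    (((hX₂.const_mul x₂).add (hX₃.const_mul x₃)).const_mul 2)).congr_deriv ?_
  ring

theorem lanchester_army_of_one_3d_invariant_general (x₁ x₂ x₃ : ℝ)
    (X₁ X₂ X₃ : ℝ → ℝ)
    (hX₁ : ∀ t : ℝ, HasDerivAt X₁ ((-(x₂ * X₂ t) - x₃ * X₃ t) * X₁ t) t)
    (hX₂ : ∀ t : ℝ, HasDerivAt X₂ (-(1 / 2 * x₁ * X₁ t * X₂ t)) t)
    (hX₃ : ∀ t : ℝ, HasDerivAt X₃ (-(1 / 2 * x₁ * X₁ t * X₃ t)) t) :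
    ∀ t : ℝ, x₁ * X₁ t - 2 * (x₂ * X₂ t + x₃ * X₃ t)
      = x₁ * X₁ 0 - 2 * (x₂ * X₂ 0 + x₃ * X₃ 0) := by
  have hderiv t := hasDerivAt_armyOfOne_invariant (hX₁ t) (hX₂ t) (hX₃ t)
  exact fun t => is_const_of_deriv_eq_zero (fun s => (hderiv s).differentiableAt)
    (fun s => (hderiv s).deriv) t 0

theorem lanchester_army_of_one_3d_invariant (x₁ x₂ x₃ : ℝ)
    (hx₁ : 0 < x₁) (hx₂ : 0 < x₂) (hx₃ : 0 < x₃)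
    (X₁ X₂ X₃ : ℝ → ℝ)
    (hX₁ : ∀ t : ℝ, HasDerivAt X₁ ((-(x₂ * X₂ t) - x₃ * X₃ t) * X₁ t) t)
    (hX₂ : ∀ t : ℝ, HasDerivAt X₂ (-(1 / 2 * x₁ * X₁ t * X₂ t)) t)
    (hX₃ : ∀ t : ℝ, HasDerivAt X₃ (-(1 / 2 * x₁ * X₁ t * X₃ t)) t) :
    ∀ t : ℝ, x₁ * X₁ t - 2 * (x₂ * X₂ t + x₃ * X₃ t)
      = x₁ * X₁ 0 - 2 * (x₂ * X₂ 0 + x₃ * X₃ 0) :=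
  lanchester_army_of_one_3d_invariant_general x₁ x₂ x₃ X₁ X₂ X₃ hX₁ hX₂ hX₃
end

section
/- Along solutions of the n-dimensional army-of-one unaimed system X₁' = (-∑_{i=2}^n xᵢXᵢ)X₁ and Xⱼ' = -(x₁/(n-1))X₁Xⱼ for j = 2, …, n, the quantity x₁X₁(t) - (n-1)·∑_{i=2}^n xᵢXᵢ(t) is constant in time. -/
/-!
All of `X₂, …, Xₙ` obey the same linear equation `Y' = -(x₁/(n-1)) X₁ Y`, hence so does their
weighted sum `S = ∑ xᵢ Xᵢ`. The pair `(X₁, S)` then solves Lanchester's linear-law system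
`u' = -a u v`, `v' = -b u v`, along which `b u - a v` is constant.
-/

theorem HasDerivAt.sum_const_mul_of_forall {ι 𝕜 : Type*} [NontriviallyNormedField 𝕜]
    (s : Finset ι) (c : ι → 𝕜) {Y : ι → 𝕜 → 𝕜} {κ t : 𝕜}
    (hY : ∀ i ∈ s, HasDerivAt (Y i) (κ * Y i t) t) :
    HasDerivAt (fun u => ∑ i ∈ s, c i * Y i u) (κ * ∑ i ∈ s, c i * Y i t) t := by
  rw [Finset.mul_sum]
  refine HasDerivAt.fun_sum fun i hi => ((hY i hi).const_mul (c i)).congr_deriv ?_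
  ring

theorem lanchester_linear_law {u v : ℝ → ℝ} {a b : ℝ}
    (hu : ∀ t, HasDerivAt u (-a * u t * v t) t) (hv : ∀ t, HasDerivAt v (-b * u t * v t) t)
    (t : ℝ) : b * u t - a * v t = b * u 0 - a * v 0 := by
  have hderiv : ∀ t, HasDerivAt (fun t => b * u t - a * v t) 0 t := fun t =>
    (((hu t).const_mul b).sub ((hv t).const_mul a)).congr_deriv (by ring)
  exact is_const_of_deriv_eq_zero (fun t => (hderiv t).differentiableAt)
    (fun t => (hderiv t).deriv) t 0

theorem lanchester_army_of_one_invariant_general (n : ℕ) (hn : 2 ≤ n)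
    (x : ℕ → ℝ) (X : ℕ → ℝ → ℝ)
    (hX₁ : ∀ t : ℝ, HasDerivAt (X 1)
      ((-(∑ i ∈ Finset.Icc 2 n, x i * X i t)) * X 1 t) t)
    (hXj : ∀ j, 2 ≤ j → j ≤ n → ∀ t : ℝ,
      HasDerivAt (X j) (-(x 1 / ((n : ℝ) - 1)) * X 1 t * X j t) t) :
    ∀ t : ℝ, x 1 * X 1 t - ((n : ℝ) - 1) * ∑ i ∈ Finset.Icc 2 n, x i * X i t
      = x 1 * X 1 0 - ((n : ℝ) - 1) * ∑ i ∈ Finset.Icc 2 n, x i * X i 0 := by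
  have hn₁ : (n : ℝ) - 1 ≠ 0 := by
    have : (2 : ℝ) ≤ n := by exact_mod_cast hn
    linarith
  have hS (t : ℝ) := HasDerivAt.sum_const_mul_of_forall (Finset.Icc 2 n) x fun j hj =>
    hXj j (Finset.mem_Icc.1 hj).1 (Finset.mem_Icc.1 hj).2 t
  have hU (t : ℝ) := (hX₁ t).congr_deriv (show _ = -1 * X 1 t * _ by ring)
  intro t
  have hlaw := lanchester_linear_law hU hS t
  field_simp at hlaw
  linear_combination hlaw

theorem lanchester_army_of_one_invariant (n : ℕ) (hn : 2 ≤ n)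
    (x : ℕ → ℝ) (X : ℕ → ℝ → ℝ)
    (hx : ∀ i, 1 ≤ i → i ≤ n → 0 < x i)
    (hX₁ : ∀ t : ℝ, HasDerivAt (X 1)
      ((-(∑ i ∈ Finset.Icc 2 n, x i * X i t)) * X 1 t) t)
    (hXj : ∀ j, 2 ≤ j → j ≤ n → ∀ t : ℝ,
      HasDerivAt (X j) (-(x 1 / ((n : ℝ) - 1)) * X 1 t * X j t) t) :
    ∀ t : ℝ, x 1 * X 1 t - ((n : ℝ) - 1) * ∑ i ∈ Finset.Icc 2 n, x i * X i t
      = x 1 * X 1 0 - ((n : ℝ) - 1) * ∑ i ∈ Finset.Icc 2 n, x i * X i 0 :=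
  lanchester_army_of_one_invariant_general n hn x X hX₁ hXj
end
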